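/- (Lemma 1) Let I be a nonempty finite index set and let τ(i) ∈ T_im for all i ∈ I. For ε > 0 define T(ε) = {t ∈ T : dist(t, conv{τ(i) : i ∈ I}) ≥ ε} (Euclidean distance to the convex hull) and X(ε) = {x ∈ ℝⁿ : A(x)τ(i) ≥ 0 componentwise for all i ∈ I, and tᵀA(x)t ≥ 0 for all t ∈ T(ε)}. Then there exists ε₀ > 0 such that X(ε₀) = X. -/

import Mathlib

open Matrix

/-- The constraint matrix function `𝓐(x) = A₀ + ∑ i xᵢ Aᵢ`. -/
def Amap (p n : ℕ) (A₀ : Matrix (Fin p) (Fin p) ℝ)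
    (A : Fin n → Matrix (Fin p) (Fin p) ℝ) (x : Fin n → ℝ) :
    Matrix (Fin p) (Fin p) ℝ :=
  A₀ + ∑ i, x i • A i

/-- The feasible set `X = {x : tᵀ𝓐(x)t ≥ 0 ∀ t ∈ ℝ₊ᵖ}`. -/
def feasSet (p n : ℕ) (A₀ : Matrix (Fin p) (Fin p) ℝ)
    (A : Fin n → Matrix (Fin p) (Fin p) ℝ) : Set (Fin n → ℝ) :=
  {x | ∀ t : Fin p → ℝ, (∀ k, 0 ≤ t k) → 0 ≤ t ⬝ᵥ (Amap p n A₀ A x *ᵥ t)}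

/-- The normalized immobile index set `T_im = {t ∈ T : tᵀ𝓐(x)t = 0 ∀ x ∈ X}`. -/
def normImmobile (p n : ℕ) (A₀ : Matrix (Fin p) (Fin p) ℝ)
    (A : Fin n → Matrix (Fin p) (Fin p) ℝ) : Set (Fin p → ℝ) :=
  {t | (∀ k, 0 ≤ t k) ∧ (∑ k, t k) = 1 ∧
    ∀ x ∈ feasSet p n A₀ A, t ⬝ᵥ (Amap p n A₀ A x *ᵥ t) = 0}

/-- The immobile index set `R_im = {t ∈ ℝ₊ᵖ : tᵀ𝓐(x)t = 0 ∀ x ∈ X}`. -/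
def immobile (p n : ℕ) (A₀ : Matrix (Fin p) (Fin p) ℝ)
    (A : Fin n → Matrix (Fin p) (Fin p) ℝ) : Set (Fin p → ℝ) :=
  {t | (∀ k, 0 ≤ t k) ∧ ∀ x ∈ feasSet p n A₀ A, t ⬝ᵥ (Amap p n A₀ A x *ᵥ t) = 0}

/-! Let `q(t) = tᵀ A(x) t` with `A(x) τᵢ ≥ 0`. If `s` lies in `conv {τᵢ}`, then also `A(x) s ≥ 0`,
so `q(s) ≥ 0`; if moreover `s ≤ 2 t` coordinatewise, then `q` restricted to the line from `s`
through `t` stays negative beyond `t` once `q(t) < 0`. Following that line until it leaves the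
nonnegative orthant yields a point of the simplex with smaller support where `q` is still negative.
Once `ε` is small compared with the smallest positive coordinate of the `τᵢ`, every point of the
simplex within `ε` of the hull admits such an `s`; so a negative value of `q` on the simplex would
lead, by descent on the support, to one at distance at least `ε` from the hull. Conversely a
feasible `x` satisfies `A(x) τᵢ ≥ 0`, since `τᵢ` minimizes the copositive form `q`. -/

open Filter Topology

lemma convexHull_range_eq_image_stdSimplex {ι E : Type*} [Fintype ι] [AddCommGroup E]
    [Module ℝ E] (τ : ι → E) :
    convexHull ℝ (Set.range τ) = Fintype.linearCombination ℝ τ '' stdSimplex ℝ ι := by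
  classical
  rw [← convexHull_rangle_single_eq_stdSimplex, LinearMap.image_convexHull, ← Set.range_comp]
  congr
  funext i
  simp [Fintype.linearCombination_apply_single]

lemma exists_pos_mul_le_of_pos {ι : Type*} [Finite ι] (f : ι → ℝ) (c : ℝ) :
    ∃ ε > 0, ∀ i, 0 < f i → c * ε ≤ f i := by
  have hsmall : ∀ᶠ ε in 𝓝[>] (0 : ℝ), ∀ i, 0 < f i → c * ε ≤ f i := by
    refine Filter.eventually_all.2 fun i => ?_
    by_cases hi : 0 < f i
    · have hc : Filter.Tendsto (c * ·) (𝓝[>] (0 : ℝ)) (𝓝 0) := by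
        simpa using ((continuous_const_mul c).tendsto 0).mono_left nhdsWithin_le_nhds
      exact (hc.eventually (eventually_le_nhds hi)).mono fun ε h _ => h
    · exact Filter.Eventually.of_forall fun _ h => absurd h hi
  obtain ⟨ε, hε, hpos⟩ := (hsmall.and self_mem_nhdsWithin).exists
  exact ⟨ε, hpos, hε⟩

lemma abs_apply_le_sqrt_sum_sq {κ : Type*} [Fintype κ] (v : κ → ℝ) (k : κ) :
    |v k| ≤ √(∑ j, v j ^ 2) :=
  Real.abs_le_sqrt <| Finset.single_le_sum (f := fun j => v j ^ 2) (fun _ _ => sq_nonneg _)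
    (Finset.mem_univ k)

lemma sum_sub_le_sum_filter_le_card_mul {ι : Type*} [Fintype ι] (w : ι → ℝ) {c : ℝ}
    (hc : 0 ≤ c) :
    ∑ i, w i - c ≤ ∑ i ∈ Finset.univ.filter (fun i => c ≤ Fintype.card ι * w i), w i := by
  rcases isEmpty_or_nonempty ι with hι | hι
  · simpa using hc
  have hN : (0 : ℝ) < Fintype.card ι := Nat.cast_pos.2 Fintype.card_pos
  have hsmall : ∑ i ∈ Finset.univ.filter (fun i => ¬ c ≤ Fintype.card ι * w i),
      Fintype.card ι * w i ≤ Fintype.card ι * c :=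
    calc _ ≤ ∑ i ∈ Finset.univ.filter (fun i => ¬ c ≤ Fintype.card ι * w i), c :=
          Finset.sum_le_sum fun i hi => (not_le.1 (Finset.mem_filter.1 hi).2).le
      _ ≤ Fintype.card ι * c := by
          simpa using mul_le_mul_of_nonneg_right
            (Nat.cast_le.2 (Finset.card_filter_le Finset.univ _)) hc
  rw [← Finset.mul_sum] at hsmall
  have := Finset.sum_filter_add_sum_filter_not Finset.univ (fun i => c ≤ Fintype.card ι * w i) w
  nlinarith

lemma exists_mem_convexHull_le_two_smul {ι κ : Type*} [Fintype ι] {τ : ι → κ → ℝ}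
    (hτ : ∀ i, 0 ≤ τ i) {ε : ℝ} (hε : ∀ i k, 0 < τ i k → 16 * Fintype.card ι * ε ≤ τ i k)
    {s₀ t : κ → ℝ} (hs₀ : s₀ ∈ convexHull ℝ (Set.range τ)) (ht : 0 ≤ t)
    (hclose : ∀ k, s₀ k < t k + ε) :
    ∃ s ∈ convexHull ℝ (Set.range τ), s ≤ 2 • t := by
  classical
  rw [convexHull_range_eq_image_stdSimplex] at hs₀
  obtain ⟨w, ⟨hw₀, hw₁⟩, rfl⟩ := hs₀
  have ht' : ∀ k, 0 ≤ t k := ht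
  -- Keep the weights `≥ 1 / (4 N)`, `N = card ι`: they carry mass `≥ 3 / 4`, and each positive
  -- coordinate `P` of their weighted sum is `≥ τᵢₖ / (4 N) ≥ 4 ε`; as `P ≤ s₀ₖ < tₖ + ε`, the
  -- normalized sum `s` satisfies `s ≤ 2 t`.
  set A := Finset.univ.filter fun i => 1 / 4 ≤ Fintype.card ι * w i
  have hA : 3 / 4 ≤ ∑ i ∈ A, w i := by
    linarith [sum_sub_le_sum_filter_le_card_mul w (by norm_num : (0 : ℝ) ≤ 1 / 4)]
  refine ⟨A.centerMass w τ, A.centerMass_mem_convexHull (fun i _ => hw₀ i) (by linarith)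
    fun i _ => Set.mem_range_self i, fun k => ?_⟩
  set P := ∑ i ∈ A, w i * τ i k
  have hsk : A.centerMass w τ k = (∑ i ∈ A, w i)⁻¹ * P := by
    simp [Finset.centerMass, Finset.sum_apply, P]
  have hP₀ : 0 ≤ P := Finset.sum_nonneg fun i _ => mul_nonneg (hw₀ i) (hτ i k)
  have hPs₀ : P ≤ Fintype.linearCombination ℝ τ w k := by
    rw [Fintype.linearCombination_apply, Finset.sum_apply]
    exact Finset.sum_le_sum_of_subset_of_nonneg (Finset.filter_subset _ _)
      fun i _ _ => mul_nonneg (hw₀ i) (hτ i k)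
  have hPε : P ≤ t k + P / 4 := by
    rcases hP₀.eq_or_lt with hP | hP
    · linarith [ht' k]
    obtain ⟨i, hiA, hi⟩ := Finset.exists_lt_of_sum_lt (f := fun _ => (0 : ℝ)) (by simpa using hP)
    have hwi := (Finset.mem_filter.1 hiA).2
    have hτik : 0 < τ i k := pos_of_mul_pos_right hi (hw₀ i)
    have hiP : w i * τ i k ≤ P :=
      Finset.single_le_sum (f := fun i => w i * τ i k) (fun j _ => mul_nonneg (hw₀ j) (hτ j k)) hiA
    have h4ε : 4 * ε ≤ P := by
      rcases le_or_gt ε 0 with hε₀ | hε₀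
      · linarith
      · nlinarith [mul_le_mul_of_nonneg_left (hε i k hτik) (hw₀ i),
          mul_le_mul_of_nonneg_left hwi hε₀.le]
    linarith [hclose k]
  rw [hsk, Pi.smul_apply, two_nsmul, inv_mul_le_iff₀ (by linarith)]
  nlinarith [ht' k]

lemma exists_boundary_point_on_ray {κ : Type*} [Fintype κ] {s t : κ → ℝ} (ht : 0 ≤ t)
    (hst : ∃ k, t k < s k) :
    ∃ μ : ℝ, 0 ≤ μ ∧ 0 ≤ t + μ • (t - s) ∧ ∃ j, t j < s j ∧ (t + μ • (t - s)) j = 0 := by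
  classical
  have ht' : ∀ k, 0 ≤ t k := ht
  obtain ⟨j, hj, hmin⟩ := Finset.exists_min_image (Finset.univ.filter fun k => t k < s k)
    (fun k => t k / (s k - t k)) (by obtain ⟨k, hk⟩ := hst; exact ⟨k, by simpa using hk⟩)
  simp only [Finset.mem_filter, Finset.mem_univ, true_and] at hj hmin
  have hμ : 0 ≤ t j / (s j - t j) := div_nonneg (ht' j) (sub_nonneg.2 hj.le)
  refine ⟨t j / (s j - t j), hμ, fun k => ?_, j, hj, ?_⟩
  · simp only [Pi.add_apply, Pi.smul_apply, Pi.sub_apply, smul_eq_mul, Pi.zero_apply]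
    rcases le_or_gt (s k) (t k) with hk | hk
    · nlinarith [ht' k]
    · have := hmin k hk
      rw [le_div_iff₀ (sub_pos.2 hk)] at this
      linarith
  · simp only [Pi.add_apply, Pi.smul_apply, Pi.sub_apply, smul_eq_mul]
    field_simp [(sub_pos.2 hj).ne']
    ring

namespace Matrix

variable {κ : Type*} [Fintype κ] {M : Matrix κ κ ℝ}

def IsCopositive (M : Matrix κ κ ℝ) : Prop :=
  ∀ t : κ → ℝ, 0 ≤ t → 0 ≤ t ⬝ᵥ M *ᵥ t

lemma IsSymm.dotProduct_mulVec_comm (hM : M.IsSymm) (a b : κ → ℝ) :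
    a ⬝ᵥ M *ᵥ b = b ⬝ᵥ M *ᵥ a := by
  rw [dotProduct_mulVec, ← mulVec_transpose, hM.eq, dotProduct_comm]

lemma IsSymm.add_smul_dotProduct_mulVec_add_smul (hM : M.IsSymm) (s h : κ → ℝ) (l : ℝ) :
    (s + l • h) ⬝ᵥ M *ᵥ (s + l • h) =
      s ⬝ᵥ M *ᵥ s + 2 * l * (h ⬝ᵥ M *ᵥ s) + l ^ 2 * (h ⬝ᵥ M *ᵥ h) := by
  simp only [mulVec_add, mulVec_smul, dotProduct_add, add_dotProduct, dotProduct_smul,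
    smul_dotProduct, smul_eq_mul, hM.dotProduct_mulVec_comm s h]
  ring

lemma smul_dotProduct_mulVec_smul (c : ℝ) (t : κ → ℝ) :
    (c • t) ⬝ᵥ M *ᵥ (c • t) = c ^ 2 * (t ⬝ᵥ M *ᵥ t) := by
  simp only [mulVec_smul, dotProduct_smul, smul_dotProduct, smul_eq_mul]
  ring

lemma isCopositive_of_nonneg_on_stdSimplex (h : ∀ t ∈ stdSimplex ℝ κ, 0 ≤ t ⬝ᵥ M *ᵥ t) :
    M.IsCopositive := by
  intro t ht
  obtain hS | hS := (Finset.sum_nonneg fun k _ => ht k : 0 ≤ ∑ k, t k).eq_or_lt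
  · have : t = 0 := funext fun k =>
      (Finset.sum_eq_zero_iff_of_nonneg fun k _ => ht k).1 hS.symm k (Finset.mem_univ k)
    simp [this]
  · have hmem : (∑ k, t k)⁻¹ • t ∈ stdSimplex ℝ κ :=
      ⟨fun k => mul_nonneg (inv_nonneg.2 hS.le) (ht k), by simp [← Finset.mul_sum, hS.ne']⟩
    have := h _ hmem
    rw [smul_dotProduct_mulVec_smul] at this
    exact (mul_nonneg_iff_of_pos_left (by positivity)).1 this

lemma IsCopositive.mulVec_nonneg_of_dotProduct_mulVec_eq_zero (hMc : M.IsCopositive)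
    (hM : M.IsSymm) {τ : κ → ℝ} (hτ : 0 ≤ τ) (hq : τ ⬝ᵥ M *ᵥ τ = 0) : 0 ≤ M *ᵥ τ := by
  classical
  intro k
  by_contra! hc
  set e : κ → ℝ := Pi.single k 1
  have he : 0 ≤ e := Pi.single_nonneg.2 zero_le_one
  have hd : 0 ≤ e ⬝ᵥ M *ᵥ e := hMc e he
  -- `q(τ + α e) = 2 α (M τ)ₖ + α² q(e)`, which is negative for this `α > 0`
  set α := -(M *ᵥ τ) k / (e ⬝ᵥ M *ᵥ e + 1)
  have hα : 0 < α := div_pos (neg_pos.2 hc) (by linarith)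
  have hαd : α * (e ⬝ᵥ M *ᵥ e + 1) = -(M *ᵥ τ) k := div_mul_cancel₀ _ (by linarith)
  have hpert := hMc (τ + α • e) (add_nonneg hτ (smul_nonneg hα.le he))
  rw [hM.add_smul_dotProduct_mulVec_add_smul, hq, single_dotProduct, one_mul] at hpert
  nlinarith

lemma IsSymm.exists_support_ssubset_of_dotProduct_mulVec_neg (hM : M.IsSymm) {s t : κ → ℝ}
    (hs : 0 ≤ s) (hMs : 0 ≤ M *ᵥ s) (hst : s ≤ 2 • t) (hsum : ∑ k, s k = ∑ k, t k)
    (hq : t ⬝ᵥ M *ᵥ t < 0) :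
    ∃ u, 0 ≤ u ∧ ∑ k, u k = ∑ k, t k ∧ Function.support u ⊂ Function.support t ∧
      u ⬝ᵥ M *ᵥ u < 0 := by
  have hst' : ∀ k, s k ≤ 2 * t k := fun k => by simpa [two_nsmul, ← two_mul] using hst k
  have hs' : ∀ k, 0 ≤ s k := hs
  have ht : 0 ≤ t := fun k => show 0 ≤ t k by linarith [hs' k, hst' k]
  have ha : 0 ≤ s ⬝ᵥ M *ᵥ s := dotProduct_nonneg_of_nonneg hs hMs
  have hab : 0 ≤ s ⬝ᵥ M *ᵥ s + 2 * ((t - s) ⬝ᵥ M *ᵥ s) := by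
    have h2ts : (2 • t - s) ⬝ᵥ M *ᵥ s = s ⬝ᵥ M *ᵥ s + 2 * ((t - s) ⬝ᵥ M *ᵥ s) := by
      simp only [sub_dotProduct, two_nsmul, add_dotProduct]
      ring
    exact h2ts ▸ dotProduct_nonneg_of_nonneg (sub_nonneg.2 hst) hMs
  have hexit : ∃ k, t k < s k := by
    by_contra! hle
    have : s = t := funext fun k =>
      (Finset.sum_eq_sum_iff_of_le fun k _ => hle k).1 hsum k (Finset.mem_univ k)
    exact hq.not_ge (this ▸ ha)
  obtain ⟨μ, hμ, hu, j, hj, huj⟩ := exists_boundary_point_on_ray ht hexit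
  refine ⟨t + μ • (t - s), hu, ?_, ?_, ?_⟩
  · simp [Finset.sum_add_distrib, ← Finset.mul_sum, Finset.sum_sub_distrib, hsum]
  · refine (Set.ssubset_iff_of_subset fun k hk => ?_).2 ⟨j, ?_, Function.notMem_support.2 huj⟩
    · contrapose hk
      rw [Function.notMem_support] at hk ⊢
      have : s k = 0 := le_antisymm (by linarith [hst' k]) (hs k)
      simp [hk, this]
    · exact (by linarith [hst' j] : 0 < t j).ne'
  · -- with `a = q(s) ≥ 0` and `a + 2b = (2t - s)ᵀ M s ≥ 0`, on the line `s + l • (t - s)`: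
    -- `q(s + (1 + μ) • (t - s)) = (1 + μ)² q(t) - μ ((1 + μ) (a + 2b) + a)`
    have hline : ∀ l : ℝ, (s + l • (t - s)) ⬝ᵥ M *ᵥ (s + l • (t - s)) =
        s ⬝ᵥ M *ᵥ s + 2 * l * ((t - s) ⬝ᵥ M *ᵥ s) + l ^ 2 * ((t - s) ⬝ᵥ M *ᵥ (t - s)) :=
      hM.add_smul_dotProduct_mulVec_add_smul s (t - s)
    have hqt := hline 1
    have hqu := hline (1 + μ)
    rw [show s + (1 : ℝ) • (t - s) = t by module] at hqt
    rw [show s + (1 + μ) • (t - s) = t + μ • (t - s) by module] at hqu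
    rw [hqu]
    nlinarith [mul_nonneg hμ (add_nonneg (mul_nonneg (by linarith : (0 : ℝ) ≤ 1 + μ) hab) ha),
      mul_neg_of_pos_of_neg (by positivity : (0 : ℝ) < (1 + μ) ^ 2) hq]

lemma IsSymm.nonneg_on_stdSimplex_of_neg_near_convexHull {ι : Type*} [Fintype ι]
    (hM : M.IsSymm) {τ : ι → κ → ℝ}
    (hτ : ∀ i, τ i ∈ stdSimplex ℝ κ) (hMτ : ∀ i, 0 ≤ M *ᵥ τ i) {ε : ℝ}
    (hε : ∀ i k, 0 < τ i k → 16 * Fintype.card ι * ε ≤ τ i k)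
    (hnear : ∀ t ∈ stdSimplex ℝ κ, t ⬝ᵥ M *ᵥ t < 0 →
      ∃ s₀ ∈ convexHull ℝ (Set.range τ), ∀ k, s₀ k < t k + ε) :
    ∀ t ∈ stdSimplex ℝ κ, 0 ≤ t ⬝ᵥ M *ᵥ t := by
  intro t ht
  induction hN : (Function.support t).ncard using Nat.strong_induction_on generalizing t with
  | _ N ih =>
  by_contra! hq
  obtain ⟨s₀, hs₀, hclose⟩ := hnear t ht hq
  obtain ⟨s, hs, hst⟩ := exists_mem_convexHull_le_two_smul (fun i => (hτ i).1) hε hs₀ ht.1 hclose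
  have hs_simplex : s ∈ stdSimplex ℝ κ :=
    convexHull_min (Set.range_subset_iff.2 hτ) (convex_stdSimplex ℝ κ) hs
  have hMs : 0 ≤ M *ᵥ s :=
    convexHull_min (Set.range_subset_iff.2 hMτ) ((convex_Ici 0).linear_preimage M.mulVecLin) hs
  obtain ⟨u, hu, husum, hsupp, hqu⟩ :=
    hM.exists_support_ssubset_of_dotProduct_mulVec_neg hs_simplex.1 hMs hst
      (hs_simplex.2.trans ht.2.symm) hq
  exact (ih _ (hN ▸ Set.ncard_lt_ncard hsupp) u ⟨hu, husum.trans ht.2⟩ rfl).not_gt hqu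

end Matrix

lemma isSymm_Amap {p n : ℕ} {A₀ : Matrix (Fin p) (Fin p) ℝ} {A : Fin n → Matrix (Fin p) (Fin p) ℝ}
    (hA₀ : A₀.IsSymm) (hA : ∀ i, (A i).IsSymm) (x : Fin n → ℝ) : (Amap p n A₀ A x).IsSymm :=
  hA₀.add <| Finset.sum_induction _ IsSymm (fun _ _ => IsSymm.add) isSymm_zero
    fun i _ => (hA i).smul (x i)

theorem exists_eps_cutset_eq_feasSet_general (p n : ℕ)
    (A₀ : Matrix (Fin p) (Fin p) ℝ) (A : Fin n → Matrix (Fin p) (Fin p) ℝ)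
    (hA₀ : A₀.IsSymm) (hA : ∀ i, (A i).IsSymm)
    {I : Type} [Fintype I] (τ : I → Fin p → ℝ)
    (hτ : ∀ i, τ i ∈ normImmobile p n A₀ A) :
    ∃ ε₀ : ℝ, 0 < ε₀ ∧
      {x : Fin n → ℝ |
          (∀ i, ∀ k, 0 ≤ (Amap p n A₀ A x *ᵥ τ i) k) ∧
          ∀ t : Fin p → ℝ, (∀ k, 0 ≤ t k) → (∑ k, t k) = 1 →
            (∀ s ∈ convexHull ℝ (Set.range τ),
              ε₀ ≤ Real.sqrt (∑ k, (t k - s k) ^ 2)) →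
            0 ≤ t ⬝ᵥ (Amap p n A₀ A x *ᵥ t)} = feasSet p n A₀ A := by
  obtain ⟨ε₀, hε₀, hε⟩ :=
    exists_pos_mul_le_of_pos (fun ik : I × Fin p => τ ik.1 ik.2) (16 * Fintype.card I)
  refine ⟨ε₀, hε₀, Set.ext fun x => ⟨fun ⟨hMτ, hfar⟩ => ?_, fun hx => ⟨fun i => ?_, ?_⟩⟩⟩
  · refine isCopositive_of_nonneg_on_stdSimplex <|
      (isSymm_Amap hA₀ hA x).nonneg_on_stdSimplex_of_neg_near_convexHull
        (fun i => ⟨(hτ i).1, (hτ i).2.1⟩) hMτ (fun i k => hε (i, k)) fun t ht hq => ?_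
    by_contra! hfar'
    refine hq.not_ge (hfar t ht.1 ht.2 fun s hs => ?_)
    obtain ⟨k, hk⟩ := hfar' s hs
    calc ε₀ ≤ |t k - s k| :=
          abs_sub_comm (s k) (t k) ▸ (le_sub_iff_add_le'.2 hk).trans (le_abs_self _)
      _ ≤ √(∑ k, (t k - s k) ^ 2) := abs_apply_le_sqrt_sum_sq (t - s) k
  · exact IsCopositive.mulVec_nonneg_of_dotProduct_mulVec_eq_zero hx (isSymm_Amap hA₀ hA x)
      (hτ i).1 ((hτ i).2.2 x hx)
  · exact fun t ht _ _ => hx t ht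

/-- Lemma 1: given finitely many normalized immobile indices
`τ(i), i ∈ I ≠ ∅`, there is `ε₀ > 0` such that the set `𝒳(ε₀)` of points `x`
satisfying `𝓐(x)τ(i) ≥ 0` for all `i ∈ I` together with `tᵀ𝓐(x)t ≥ 0` for all
`t ∈ T` whose Euclidean distance to `conv{τ(i) : i ∈ I}` is at least `ε₀`,
coincides with the feasible set `X`.  (The distance condition
`ρ(t, conv{τ(i)}) ≥ ε₀` is expressed equivalently as `‖t - s‖ ≥ ε₀` for every
`s` in the convex hull, which is nonempty.) -/
theorem exists_eps_cutset_eq_feasSet (p n : ℕ) (hp : 1 ≤ p) (hn : 1 ≤ n)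
    (A₀ : Matrix (Fin p) (Fin p) ℝ) (A : Fin n → Matrix (Fin p) (Fin p) ℝ)
    (hA₀ : A₀.IsSymm) (hA : ∀ i, (A i).IsSymm)
    {I : Type} [Fintype I] [Nonempty I] (τ : I → Fin p → ℝ)
    (hτ : ∀ i, τ i ∈ normImmobile p n A₀ A) :
    ∃ ε₀ : ℝ, 0 < ε₀ ∧
      {x : Fin n → ℝ |
          (∀ i, ∀ k, 0 ≤ (Amap p n A₀ A x *ᵥ τ i) k) ∧
          ∀ t : Fin p → ℝ, (∀ k, 0 ≤ t k) → (∑ k, t k) = 1 →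
            (∀ s ∈ convexHull ℝ (Set.range τ),
              ε₀ ≤ Real.sqrt (∑ k, (t k - s k) ^ 2)) →
            0 ≤ t ⬝ᵥ (Amap p n A₀ A x *ᵥ t)} = feasSet p n A₀ A :=
  exists_eps_cutset_eq_feasSet_general p n A₀ A hA₀ hA τ hτ
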